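/- For every k ∈ ℕ, the set of pairs (n₁,n₂) ∈ ℤ² whose 2-dimensional canonical Fibonacci representation rep_F(n₁,n₂) has length 2k+1 equals I_k² \ I_{k−1}², where I_k = {i ∈ ℤ : −F_{2k} ≤ i < F_{2k+1}} and I_{−1} = ∅. -/

import Mathlib

/-- Fibonacci sequence with `F 0 = 1`, `F 1 = 1`, `F 2 = 2`. -/
def F : ℕ → ℤ
  | 0 => 1
  | 1 => 1
  | (n+2) => F (n+1) + F n

/-- Numerical value of a binary digit. -/
def bv (x : Bool) : ℤ := if x then 1 else 0

/-- Value of an odd-length binary word `w = w_{2k+1} ⋯ w_1` (most significant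
digit first): `val_F(w) = Σ_{i=1}^{2k} w_i F_i − w_{2k+1} F_{2k}`. -/
def valF (w : List Bool) : ℤ :=
  (∑ i ∈ Finset.range (w.length - 1), bv (w.reverse.getD i false) * F (i+1))
    - bv (w.reverse.getD (w.length - 1) false) * F (w.length - 1)

/-- The word has no factor `11`. -/
def no11 (w : List Bool) : Prop :=
  List.Chain' (fun x y => ¬(x = true ∧ y = true)) w

/-- Words of the canonical representation language: odd length, no factor 11,
not beginning with 000 nor with 101. -/
def IsRep (w : List Bool) : Prop :=
  Odd w.length ∧ no11 w ∧
    ¬ ([false, false, false] <+: w) ∧ ¬ ([true, false, true] <+: w)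

/-- `Ik k = {i ∈ ℤ : −F_{2k} ≤ i < F_{2k+1}}`. -/
def Ik (k : ℕ) : Set ℤ := {i : ℤ | -F (2*k) ≤ i ∧ i < F (2*k+1)}

/-- Shifted version of `Ik` incorporating `I_{−1} = ∅`. -/
def Iext : ℕ → Set ℤ
  | 0 => ∅
  | (k+1) => Ik k

/-- The morphism `h : 0 ↦ 00, 1 ↦ 01, 2 ↦ 10` on single letters. -/
def h3 : Fin 3 → List Bool
  | 0 => [false, false]
  | 1 => [false, true]
  | 2 => [true, false]

/-!
Write a canonical word of length `2k+1` as `a·u`. Its value is `zval(u) - a·F_{2k}`, where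
`0 ≤ zval(u) < F_{2k+1}` is the ordinary Zeckendorf value of `u` (no factor `11`); so it lies
in `I_k`. Conversely, of the admissible three-letter prefixes, exactly the excluded `000` and
`101` would keep the value inside `I_{k-1}`. Hence `|rep_F(n)| ≤ 2k+1 ↔ n ∈ I_k`, and the
two-dimensional statement follows because the length of `rep_F(n₁,n₂)` is the maximum of the
two lengths.
-/

lemma F_pos : ∀ n, 0 < F n
  | 0 => by simp [F]
  | 1 => by simp [F]
  | (n+2) => add_pos (F_pos (n+1)) (F_pos n)

lemma F_le_succ : ∀ n, F n ≤ F (n+1)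
  | 0 => le_refl _
  | (n+1) => le_add_of_nonneg_right (F_pos n).le

lemma F_monotone : Monotone F := monotone_nat_of_le_succ F_le_succ

lemma bv_nonneg (x : Bool) : 0 ≤ bv x := by cases x <;> simp [bv]

/-- `Σ w_i F_i` for `w = w_n ⋯ w_1`: the unsigned counterpart of `valF`. -/
def zeckVal : List Bool → ℤ
  | [] => 0
  | a :: u => bv a * F (u.length + 1) + zeckVal u

lemma zeckVal_nonneg : ∀ u : List Bool, 0 ≤ zeckVal u
  | [] => le_refl 0
  | a :: u => add_nonneg (mul_nonneg (bv_nonneg a) (F_pos _).le) (zeckVal_nonneg u)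

lemma zeckVal_lt : ∀ u : List Bool, no11 u → zeckVal u < F (u.length + 1)
  | [] => fun _ => by simp [zeckVal, F]
  | [true] => fun _ => by simp [zeckVal, bv, F]
  | false :: u => fun hu => by
      have := zeckVal_lt u hu.tail
      have := F_le_succ (u.length + 1)
      simp only [zeckVal, bv, List.length_cons, Bool.false_eq_true, if_false]
      linarith
  | true :: true :: _ => fun hu => absurd ⟨rfl, rfl⟩ (List.isChain_cons_cons.1 hu).1
  | true :: false :: u => fun hu => by
      have := zeckVal_lt u hu.tail.tail
      have hF : F (u.length + 3) = F (u.length + 2) + F (u.length + 1) := rfl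
      simp only [zeckVal, bv, List.length_cons, Bool.false_eq_true, if_true, if_false]
      linarith

section reverse

variable (a : Bool) (u : List Bool)

lemma getD_reverse_cons_of_lt {i : ℕ} (hi : i < u.length) :
    (a :: u).reverse.getD i false = u.reverse.getD i false := by
  rw [List.reverse_cons, List.getD_append _ _ _ _ (by simpa using hi)]

lemma getD_reverse_cons_length : (a :: u).reverse.getD u.length false = a := by
  rw [List.reverse_cons, List.getD_append_right _ _ _ _ (by simp)]
  simp

lemma sum_range_getD_reverse_cons :
    ∑ i ∈ Finset.range u.length, bv ((a :: u).reverse.getD i false) * F (i+1)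
      = ∑ i ∈ Finset.range u.length, bv (u.reverse.getD i false) * F (i+1) :=
  Finset.sum_congr rfl fun _ hi => by
    rw [getD_reverse_cons_of_lt a u (Finset.mem_range.1 hi)]

end reverse

lemma sum_range_getD_reverse_eq_zeckVal : ∀ u : List Bool,
    ∑ i ∈ Finset.range u.length, bv (u.reverse.getD i false) * F (i+1) = zeckVal u
  | [] => by simp [zeckVal]
  | a :: u => by
      rw [List.length_cons, Finset.sum_range_succ, sum_range_getD_reverse_cons,
        sum_range_getD_reverse_eq_zeckVal u, getD_reverse_cons_length, zeckVal, add_comm]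

lemma valF_cons (a : Bool) (u : List Bool) :
    valF (a :: u) = zeckVal u - bv a * F u.length := by
  rw [valF, List.length_cons, Nat.add_sub_cancel, sum_range_getD_reverse_cons,
    sum_range_getD_reverse_eq_zeckVal, getD_reverse_cons_length]

lemma Ik_mono : Monotone Ik := fun j k hjk n ⟨hlo, hhi⟩ =>
  ⟨le_trans (neg_le_neg (F_monotone (by omega))) hlo,
    lt_of_lt_of_le hhi (F_monotone (by omega))⟩

lemma valF_mem_Ik {w : List Bool} {k : ℕ} (hw : no11 w) (hl : w.length = 2*k+1) :
    valF w ∈ Ik k := by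
  obtain ⟨a, u, rfl⟩ := List.exists_cons_of_length_eq_add_one hl
  have hu : u.length = 2*k := by simpa using hl
  have hlt := zeckVal_lt u hw.tail
  have := zeckVal_nonneg u
  have := F_pos (2*k)
  rw [hu] at hlt
  rw [valF_cons, hu]
  cases a <;> simp only [bv, Bool.false_eq_true, if_true, if_false] <;>
    exact ⟨by linarith, by linarith⟩

lemma valF_not_mem_Ik {v : List Bool} {a b c : Bool} {k : ℕ} (hw : no11 (a :: b :: c :: v))
    (h000 : ¬ [false, false, false] <+: a :: b :: c :: v)
    (h101 : ¬ [true, false, true] <+: a :: b :: c :: v) (hl : v.length = 2*k) :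
    valF (a :: b :: c :: v) ∉ Ik k := by
  have hlt := zeckVal_lt v hw.tail.tail.tail
  have := zeckVal_nonneg v
  have hF2 : F (2*k+2) = F (2*k+1) + F (2*k) := rfl
  have := F_pos (2*k)
  rw [hl] at hlt
  rw [valF_cons, zeckVal, zeckVal]
  simp only [List.length_cons, hl]
  rintro ⟨hlo, hhi⟩
  have hab := (List.isChain_cons_cons.1 hw).1
  cases a <;> cases b <;> cases c <;>
    simp_all [bv, List.prefix_iff_eq_take] <;> linarith

lemma valF_mem_Iext_iff {w : List Bool} (hw : IsRep w) (j : ℕ) :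
    valF w ∈ Iext j ↔ w.length < 2*j := by
  obtain ⟨⟨m, hm⟩, h11, h000, h101⟩ := hw
  cases j with
  | zero => simp [Iext]
  | succ k =>
    simp only [Iext]
    constructor
    · intro hk
      by_contra! hmk
      obtain ⟨a, b, c, v, rfl⟩ : ∃ a b c v, w = a :: b :: c :: v := by
        rcases w with _ | ⟨a, _ | ⟨b, _ | ⟨c, v⟩⟩⟩
        case cons.cons.cons => exact ⟨a, b, c, v, rfl⟩
        all_goals simp only [List.length_cons, List.length_nil] at hm hmk; omega
      have hv : v.length = 2*(m-1) := by simp only [List.length_cons] at hm; omega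
      exact valF_not_mem_Ik h11 h000 h101 hv (Ik_mono (by omega) hk)
    · intro hmk
      exact Ik_mono (by omega) (valF_mem_Ik h11 hm)

/-- Pairs `(n₁,n₂) ∈ ℤ²` whose 2-dimensional canonical representation has
length `2k+1` (i.e. `max(|rep_F(n₁)|, |rep_F(n₂)|) = 2k+1`) are exactly those
in `I_k² \ I_{k−1}²`. -/
theorem level_sets_two_dim (repF : ℤ → List Bool)
    (hrep : ∀ n : ℤ, IsRep (repF n) ∧ valF (repF n) = n) (k : ℕ) :
    {p : ℤ × ℤ | max (repF p.1).length (repF p.2).length = 2*k+1}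
      = (Iext (k+1) ×ˢ Iext (k+1)) \ (Iext k ×ˢ Iext k) := by
  ext ⟨n₁, n₂⟩
  obtain ⟨⟨⟨m₁, hm₁⟩, _⟩, hval₁⟩ := hrep n₁
  obtain ⟨⟨⟨m₂, hm₂⟩, _⟩, hval₂⟩ := hrep n₂
  have hI₁ := fun j => hval₁ ▸ valF_mem_Iext_iff (hrep n₁).1 j
  have hI₂ := fun j => hval₂ ▸ valF_mem_Iext_iff (hrep n₂).1 j
  simp only [Set.mem_ofPred_eq, Set.mem_sdiff, Set.mem_prod, hI₁, hI₂]
  omega
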